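/- Let $(X_n)$ be the minimal random walk with $q = 0$ and $0 < p < 1$. Then for all $n \geq 1$, $\mathbb{E}[X_n^4] = \frac{24s\,\Gamma(n+4p)}{\Gamma(n)\Gamma(1+4p)} - \frac{36s\,\Gamma(n+3p)}{\Gamma(n)\Gamma(1+3p)} + \frac{14s\,\Gamma(n+2p)}{\Gamma(n)\Gamma(1+2p)} - \frac{s\,\Gamma(n+p)}{\Gamma(n)\Gamma(1+p)}$. -/

import Mathlib

open MeasureTheory ProbabilityTheory Filter Real BoundedContinuousFunction

noncomputable section

/-- The minimal random walk of Kumar–Harbola–Lindenberg: increments `η n ∈ {0,1}`,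
`P(η 1 = 1) = s`, and for `n ≥ 1` the conditional expectation (i.e. conditional
probability of a forward step) given `σ(η 1, …, η n)` is `q + (p-q) X_n / n`,
where `X_n = ∑_{k=1}^n η k`. -/
structure IsMinimalRW {Ω : Type*} [MeasurableSpace Ω] (μ : Measure Ω)
    (p q s : ℝ) (η : ℕ → Ω → ℝ) : Prop where
  meas : ∀ n, Measurable (η n)
  zero : ∀ ω, η 0 ω = 0
  vals : ∀ n, 1 ≤ n → ∀ᵐ ω ∂μ, η n ω = 0 ∨ η n ω = 1
  init : (μ {ω | η 1 ω = 1}).toReal = s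
  cond : ∀ n : ℕ, 1 ≤ n →
      μ[η (n + 1) | ⨆ i ∈ Finset.Icc 1 n, MeasurableSpace.comap (η i) inferInstance]
        =ᵐ[μ] fun ω => q + (p - q) * (∑ k ∈ Finset.Icc 1 n, η k ω) / n

/-- The position of the walk, `X_n = ∑_{k=1}^n η_k`. -/
def walkPos {Ω : Type*} (η : ℕ → Ω → ℝ) (n : ℕ) (ω : Ω) : ℝ := ∑ k ∈ Finset.Icc 1 n, η k ω

/-- The normalizing sequence `a_n = Γ(n+α)/(Γ(n)Γ(1+α))`. -/
def aSeq (α : ℝ) (n : ℕ) : ℝ := Real.Gamma (n + α) / (Real.Gamma n * Real.Gamma (1 + α))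

/-! The rising factorials `x⁽ᵏ⁾ = x (x+1) ⋯ (x+k-1)` are eigenfunctions, with eigenvalue `k`, of
the operator `f ↦ x (f(x+1) - f(x))` that drives the walk when `q = 0`: since
`E[η_{n+1} | σ(η_1, …, η_n)] = p X_n / n`, one gets `E[X_{n+1}⁽ᵏ⁾] = (n + k p)/n · E[X_n⁽ᵏ⁾]`,
while `E[X_1⁽ᵏ⁾] = k! s`. Hence `E[X_n⁽ᵏ⁾] = k! s a_n(k p)`, and the fourth moment follows from
`x⁴ = x⁽⁴⁾ - 6 x⁽³⁾ + 7 x⁽²⁾ - x⁽¹⁾`. -/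

lemma aSeq_one {α : ℝ} (hα : -1 < α) : aSeq α 1 = 1 := by
  have : Real.Gamma (1 + α) ≠ 0 := (Real.Gamma_pos_of_pos (by linarith)).ne'
  simp [aSeq, this]

lemma aSeq_succ {α : ℝ} (hα : -1 < α) {n : ℕ} (hn : 1 ≤ n) :
    aSeq α (n + 1) = (n + α) / n * aSeq α n := by
  have hn0 : (0 : ℝ) < n := by exact_mod_cast hn
  have hΓn : Real.Gamma n ≠ 0 := (Real.Gamma_pos_of_pos hn0).ne'
  have hΓα : Real.Gamma (1 + α) ≠ 0 := (Real.Gamma_pos_of_pos (by linarith)).ne'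
  have hΓnα : Real.Gamma (n + 1 + α) = (n + α) * Real.Gamma (n + α) := by
    have : (1 : ℝ) ≤ n := by exact_mod_cast hn
    rw [add_right_comm, Real.Gamma_add_one (by linarith)]
  simp only [aSeq, Nat.cast_add, Nat.cast_one, hΓnα, Real.Gamma_add_one hn0.ne']
  field_simp

lemma ascPochhammer_eval_mul_sub_eval {R : Type*} [CommRing R] (k : ℕ) (x : R) :
    x * ((ascPochhammer R k).eval (x + 1) - (ascPochhammer R k).eval x)
      = k * (ascPochhammer R k).eval x := by
  have hleft : x * (ascPochhammer R k).eval (x + 1) = (ascPochhammer R (k + 1)).eval x := by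
    simp [ascPochhammer_succ_left]
  rw [mul_sub, hleft, ascPochhammer_succ_eval]
  ring

lemma pow_four_eq_ascPochhammer {R : Type*} [CommRing R] (x : R) :
    x ^ 4 = (ascPochhammer R 4).eval x - 6 * (ascPochhammer R 3).eval x
      + 7 * (ascPochhammer R 2).eval x - (ascPochhammer R 1).eval x := by
  simp only [ascPochhammer_succ_eval, ascPochhammer_zero, Polynomial.eval_one]
  push_cast
  ring

abbrev walkSigma {Ω : Type*} (η : ℕ → Ω → ℝ) (n : ℕ) : MeasurableSpace Ω :=
  ⨆ i ∈ Finset.Icc 1 n, MeasurableSpace.comap (η i) inferInstance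

lemma measurable_walkPos_walkSigma {Ω : Type*} (η : ℕ → Ω → ℝ) (n : ℕ) :
    Measurable[walkSigma η n] (walkPos η n) :=
  Finset.measurable_sum _ fun k hk =>
    (comap_measurable (η k)).mono
      (le_iSup₂ (f := fun i _ => MeasurableSpace.comap (η i) inferInstance) k hk) le_rfl

lemma walkPos_succ {Ω : Type*} (η : ℕ → Ω → ℝ) (n : ℕ) (ω : Ω) :
    walkPos η (n + 1) ω = walkPos η n ω + η (n + 1) ω :=
  Finset.sum_Icc_succ_top (by omega) _

namespace IsMinimalRW

variable {Ω : Type*} [mΩ : MeasurableSpace Ω] {μ : Measure Ω} {p q s : ℝ} {η : ℕ → Ω → ℝ}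

lemma ae_forall_zero_or_one (hrw : IsMinimalRW μ p q s η) :
    ∀ᵐ ω ∂μ, ∀ k, 1 ≤ k → η k ω = 0 ∨ η k ω = 1 :=
  ae_all_iff.2 fun k =>
    if hk : 1 ≤ k then (hrw.vals k hk).mono fun _ h _ => h
    else Eventually.of_forall fun _ h => absurd h hk

lemma ae_walkPos_mem_Icc (hrw : IsMinimalRW μ p q s η) (n : ℕ) :
    ∀ᵐ ω ∂μ, walkPos η n ω ∈ Set.Icc (0 : ℝ) n := by
  filter_upwards [hrw.ae_forall_zero_or_one] with ω h
  have hstep : ∀ k ∈ Finset.Icc 1 n, η k ω ∈ Set.Icc (0 : ℝ) 1 := fun k hk => by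
    rcases h k (Finset.mem_Icc.1 hk).1 with h0 | h0 <;> simp [h0]
  refine ⟨Finset.sum_nonneg fun k hk => (hstep k hk).1, ?_⟩
  calc walkPos η n ω ≤ ∑ _k ∈ Finset.Icc 1 n, (1 : ℝ) :=
        Finset.sum_le_sum fun k hk => (hstep k hk).2
    _ = n := by simp

lemma measurable_walkPos (hrw : IsMinimalRW μ p q s η) (n : ℕ) : Measurable (walkPos η n) :=
  Finset.measurable_sum _ fun k _ => hrw.meas k

lemma walkSigma_le (hrw : IsMinimalRW μ p q s η) (n : ℕ) : walkSigma η n ≤ mΩ :=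
  iSup₂_le fun i _ => (hrw.meas i).comap_le

lemma exists_ae_bound_comp_walkPos (hrw : IsMinimalRW μ p q s η) {f : ℝ → ℝ}
    (hf : Continuous f) (n : ℕ) : ∃ C, ∀ᵐ ω ∂μ, ‖f (walkPos η n ω)‖ ≤ C := by
  obtain ⟨C, hC⟩ :=
    (isCompact_Icc (a := (0 : ℝ)) (b := n)).exists_bound_of_continuousOn hf.continuousOn
  exact ⟨C, (hrw.ae_walkPos_mem_Icc n).mono fun ω h => hC _ h⟩

lemma integral_step_one (hrw : IsMinimalRW μ p q s η) : ∫ ω, η 1 ω ∂μ = s := by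
  have hind : η 1 =ᵐ[μ] (η 1 ⁻¹' {1}).indicator 1 := by
    filter_upwards [hrw.vals 1 le_rfl] with ω h
    rcases h with h | h <;> simp [h]
  rw [integral_congr_ae hind, integral_indicator_one (hrw.meas 1 (measurableSet_singleton 1)),
    measureReal_def]
  exact hrw.init

lemma integral_ascPochhammer_walkPos_one (hrw : IsMinimalRW μ p q s η) {k : ℕ} (hk : k ≠ 0) :
    ∫ ω, (ascPochhammer ℝ k).eval (walkPos η 1 ω) ∂μ = k.factorial * s := by
  have hη : (fun ω => (ascPochhammer ℝ k).eval (walkPos η 1 ω))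
      =ᵐ[μ] fun ω => k.factorial * η 1 ω := by
    filter_upwards [hrw.vals 1 le_rfl] with ω h
    rcases h with h | h <;> simp [walkPos, h, ascPochhammer_ne_zero_eval_zero _ hk]
  rw [integral_congr_ae hη, integral_const_mul, hrw.integral_step_one]

variable [IsFiniteMeasure μ]

lemma integrable_comp_walkPos (hrw : IsMinimalRW μ p q s η) {f : ℝ → ℝ} (hf : Continuous f)
    (n : ℕ) : Integrable (fun ω => f (walkPos η n ω)) μ :=
  have ⟨C, hC⟩ := hrw.exists_ae_bound_comp_walkPos hf n
  .of_bound (hf.measurable.comp (hrw.measurable_walkPos n)).aestronglyMeasurable C hC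

lemma integrable_step (hrw : IsMinimalRW μ p q s η) {n : ℕ} (hn : 1 ≤ n) :
    Integrable (η n) μ := by
  refine Integrable.of_bound (hrw.meas n).aestronglyMeasurable 1 ?_
  filter_upwards [hrw.vals n hn] with ω h
  rcases h with h | h <;> simp [h]

lemma integrable_comp_walkPos_mul_step (hrw : IsMinimalRW μ p q s η) {f : ℝ → ℝ}
    (hf : Continuous f) (n : ℕ) : Integrable (fun ω => f (walkPos η n ω) * η (n + 1) ω) μ :=
  have ⟨_, hC⟩ := hrw.exists_ae_bound_comp_walkPos hf n
  (hrw.integrable_step (Nat.le_add_left 1 n)).bdd_mul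
    (hrw.integrable_comp_walkPos hf n).aestronglyMeasurable hC

lemma integral_comp_walkPos_mul_step (hrw : IsMinimalRW μ p q s η) {f : ℝ → ℝ}
    (hf : Continuous f) {n : ℕ} (hn : 1 ≤ n) :
    ∫ ω, f (walkPos η n ω) * η (n + 1) ω ∂μ
      = ∫ ω, f (walkPos η n ω) * (q + (p - q) * walkPos η n ω / n) ∂μ := by
  have hm := hrw.walkSigma_le n
  have hη := hrw.integrable_step (Nat.le_add_left 1 n)
  have hfX : StronglyMeasurable[walkSigma η n] (fun ω => f (walkPos η n ω)) :=
    (hf.measurable.comp (measurable_walkPos_walkSigma η n)).stronglyMeasurable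
  have hfXη : Integrable ((fun ω => f (walkPos η n ω)) * η (n + 1)) μ :=
    hrw.integrable_comp_walkPos_mul_step hf n
  calc ∫ ω, f (walkPos η n ω) * η (n + 1) ω ∂μ
      = ∫ ω, μ[(fun ω => f (walkPos η n ω)) * η (n + 1) | walkSigma η n] ω ∂μ :=
        (integral_condExp hm).symm
    _ = ∫ ω, f (walkPos η n ω) * (q + (p - q) * walkPos η n ω / n) ∂μ := by
        refine integral_congr_ae ((condExp_mul_of_stronglyMeasurable_left hfX hfXη hη).trans ?_)
        filter_upwards [hrw.cond n hn] with ω hω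
        simp only [Pi.mul_apply, walkSigma] at hω ⊢
        rw [hω, walkPos]

lemma integral_comp_walkPos_succ (hrw : IsMinimalRW μ p q s η) {f : ℝ → ℝ} (hf : Continuous f)
    {n : ℕ} (hn : 1 ≤ n) :
    ∫ ω, f (walkPos η (n + 1) ω) ∂μ
      = ∫ ω, f (walkPos η n ω) ∂μ
        + ∫ ω, (f (walkPos η n ω + 1) - f (walkPos η n ω))
            * (q + (p - q) * walkPos η n ω / n) ∂μ := by
  have hg : Continuous fun x => f (x + 1) - f x := by fun_prop
  have hjump : (fun ω => f (walkPos η (n + 1) ω)) =ᵐ[μ] fun ω =>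
      f (walkPos η n ω) + (f (walkPos η n ω + 1) - f (walkPos η n ω)) * η (n + 1) ω := by
    filter_upwards [hrw.vals (n + 1) (Nat.le_add_left 1 n)] with ω h
    rcases h with h | h <;> simp [walkPos_succ, h]
  rw [integral_congr_ae hjump, integral_add (hrw.integrable_comp_walkPos hf n)
      (hrw.integrable_comp_walkPos_mul_step hg n), hrw.integral_comp_walkPos_mul_step hg hn]

lemma integral_ascPochhammer_walkPos_succ (hrw : IsMinimalRW μ p 0 s η) (k : ℕ) {n : ℕ}
    (hn : 1 ≤ n) :
    ∫ ω, (ascPochhammer ℝ k).eval (walkPos η (n + 1) ω) ∂μ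
      = (n + k * p) / n * ∫ ω, (ascPochhammer ℝ k).eval (walkPos η n ω) ∂μ := by
  have hn0 : (n : ℝ) ≠ 0 := by positivity
  have hdrift : ∀ x : ℝ, ((ascPochhammer ℝ k).eval (x + 1) - (ascPochhammer ℝ k).eval x)
      * (0 + (p - 0) * x / n) = p * k / n * (ascPochhammer ℝ k).eval x := fun x => by
    linear_combination p / n * ascPochhammer_eval_mul_sub_eval k x
  rw [hrw.integral_comp_walkPos_succ (Polynomial.continuous _) hn]
  simp only [hdrift, integral_const_mul]
  field_simp

lemma integral_ascPochhammer_walkPos (hrw : IsMinimalRW μ p 0 s η) (hp : 0 ≤ p) {k : ℕ}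
    (hk : k ≠ 0) {n : ℕ} (hn : 1 ≤ n) :
    ∫ ω, (ascPochhammer ℝ k).eval (walkPos η n ω) ∂μ = k.factorial * s * aSeq (k * p) n := by
  have hkp : -1 < (k : ℝ) * p := by linarith [mul_nonneg k.cast_nonneg hp]
  induction n, hn using Nat.le_induction with
  | base => rw [hrw.integral_ascPochhammer_walkPos_one hk, aSeq_one hkp, mul_one]
  | succ n hn ih =>
    rw [hrw.integral_ascPochhammer_walkPos_succ k hn, ih, aSeq_succ hkp hn]
    ring

end IsMinimalRW

theorem minimalRW_q0_fourth_moment_general {Ω : Type*} [MeasurableSpace Ω] (μ : Measure Ω)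
    [IsProbabilityMeasure μ] (p s : ℝ) (hp0 : 0 < p)
    (η : ℕ → Ω → ℝ) (hrw : IsMinimalRW μ p 0 s η)
    (n : ℕ) (hn : 1 ≤ n) :
    ∫ ω, (walkPos η n ω) ^ 4 ∂μ
      = 24 * s * Real.Gamma (n + 4 * p) / (Real.Gamma n * Real.Gamma (1 + 4 * p))
        - 36 * s * Real.Gamma (n + 3 * p) / (Real.Gamma n * Real.Gamma (1 + 3 * p))
        + 14 * s * Real.Gamma (n + 2 * p) / (Real.Gamma n * Real.Gamma (1 + 2 * p))
        - s * Real.Gamma (n + p) / (Real.Gamma n * Real.Gamma (1 + p)) := by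
  have hI (k : ℕ) : Integrable (fun ω => (ascPochhammer ℝ k).eval (walkPos η n ω)) μ :=
    hrw.integrable_comp_walkPos (Polynomial.continuous _) n
  have hE (k : ℕ) (hk : k ≠ 0) := hrw.integral_ascPochhammer_walkPos hp0.le hk hn
  simp only [pow_four_eq_ascPochhammer (walkPos η _ _)]
  rw [integral_sub, integral_add, integral_sub, integral_const_mul, integral_const_mul,
    hE 4 (by norm_num), hE 3 (by norm_num), hE 2 (by norm_num), hE 1 (by norm_num)]
  · simp only [aSeq, Nat.factorial, Nat.cast_ofNat, Nat.cast_one, one_mul]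
    ring
  all_goals fun_prop

/-- Fourth moment of the minimal random walk with `q = 0`. -/
theorem minimalRW_q0_fourth_moment {Ω : Type*} [MeasurableSpace Ω] (μ : Measure Ω)
    [IsProbabilityMeasure μ] (p s : ℝ) (hp0 : 0 < p) (hp1 : p < 1)
    (hs : s ∈ Set.Icc (0:ℝ) 1) (η : ℕ → Ω → ℝ) (hrw : IsMinimalRW μ p 0 s η)
    (n : ℕ) (hn : 1 ≤ n) :
    ∫ ω, (walkPos η n ω) ^ 4 ∂μ
      = 24 * s * Real.Gamma (n + 4 * p) / (Real.Gamma n * Real.Gamma (1 + 4 * p))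
        - 36 * s * Real.Gamma (n + 3 * p) / (Real.Gamma n * Real.Gamma (1 + 3 * p))
        + 14 * s * Real.Gamma (n + 2 * p) / (Real.Gamma n * Real.Gamma (1 + 2 * p))
        - s * Real.Gamma (n + p) / (Real.Gamma n * Real.Gamma (1 + p)) :=
  minimalRW_q0_fourth_moment_general μ p s hp0 η hrw n hn
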